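/- Let ω be a smooth solution of the heat equation ∂_t ω = νΔω on the unit disk D with Neumann boundary data ∂ω/∂n = α'(t)/(2πν) on the boundary, with α smooth. Then for all t > 0, ∫_D |ω(x,t)| dx ≤ ∫_D |ω(x,0)| dx + ∫₀^t |α'(s)| ds. -/

import Mathlib

open MeasureTheory Filter Set

/-- Partial derivative in the first space variable. -/
noncomputable def pd1 (f : ℝ × ℝ → ℝ) (x : ℝ × ℝ) : ℝ :=
  deriv (fun s => f (s, x.2)) x.1

/-- Partial derivative in the second space variable. -/
noncomputable def pd2 (f : ℝ × ℝ → ℝ) (x : ℝ × ℝ) : ℝ :=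
  deriv (fun s => f (x.1, s)) x.2

/-- The Laplacian in two space dimensions. -/
noncomputable def lap (f : ℝ × ℝ → ℝ) (x : ℝ × ℝ) : ℝ :=
  pd1 (pd1 f) x + pd2 (pd2 f) x

/-- The (open) unit disk in the plane. -/
def disk : Set (ℝ × ℝ) := {x | x.1 ^ 2 + x.2 ^ 2 < 1}


namespace NeumannAux

noncomputable def phi (ε y : ℝ) : ℝ := Real.sqrt (y^2 + ε^2)
noncomputable def psi (ε y : ℝ) : ℝ := y / Real.sqrt (y^2 + ε^2)
noncomputable def chi (ε y : ℝ) : ℝ := ε^2 / (Real.sqrt (y^2 + ε^2))^3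

variable {ε y : ℝ}

lemma sq_add_pos (hε : ε ≠ 0) (y : ℝ) : 0 < y^2 + ε^2 := by positivity

lemma sqrt_pos' (hε : ε ≠ 0) (y : ℝ) : 0 < Real.sqrt (y^2 + ε^2) :=
  Real.sqrt_pos.2 (sq_add_pos hε y)

lemma hasDerivAt_phi (hε : ε ≠ 0) (y : ℝ) : HasDerivAt (phi ε) (psi ε y) y := by
  have h1 : HasDerivAt (fun y : ℝ => y^2 + ε^2) (2*y) y := by
    simpa using ((hasDerivAt_pow 2 y).add_const (ε^2))
  have h2 := (Real.hasDerivAt_sqrt (sq_add_pos hε y).ne').comp y h1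
  refine h2.congr_deriv ?_
  symm
  have := (sqrt_pos' hε y).ne'
  rw [psi]
  field_simp

lemma hasDerivAt_psi (hε : ε ≠ 0) (y : ℝ) : HasDerivAt (psi ε) (chi ε y) y := by
  have h1 : HasDerivAt (fun y : ℝ => y^2 + ε^2) (2*y) y := by
    simpa using ((hasDerivAt_pow 2 y).add_const (ε^2))
  have h2 := (Real.hasDerivAt_sqrt (sq_add_pos hε y).ne').comp y h1
  have h3 := (hasDerivAt_id y).div h2 (sqrt_pos' hε y).ne'
  refine h3.congr_deriv ?_
  symm
  have hs := (sqrt_pos' hε y).ne'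
  have hsq : Real.sqrt (y^2 + ε^2) ^ 2 = y^2 + ε^2 := Real.sq_sqrt (sq_add_pos hε y).le
  rw [chi]
  simp only [Function.comp, id]
  field_simp
  linear_combination -hsq

lemma abs_psi_le (ε y : ℝ) : |psi ε y| ≤ 1 := by
  rcases eq_or_ne (Real.sqrt (y^2+ε^2)) 0 with h | h
  · simp [psi, h]
  have hpos : 0 < Real.sqrt (y^2+ε^2) := lt_of_le_of_ne (Real.sqrt_nonneg _) (Ne.symm h)
  rw [psi, abs_div, abs_of_pos hpos, div_le_one hpos]
  calc |y| = Real.sqrt (y^2) := (Real.sqrt_sq_eq_abs y).symm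
  _ ≤ _ := Real.sqrt_le_sqrt (by nlinarith)

lemma chi_nonneg (ε y : ℝ) : 0 ≤ chi ε y := by
  unfold chi; positivity

lemma abs_le_phi (ε y : ℝ) : |y| ≤ phi ε y := by
  rw [phi, ← Real.sqrt_sq_eq_abs]
  exact Real.sqrt_le_sqrt (by nlinarith)

lemma phi_le (ε y : ℝ) : phi ε y ≤ |y| + |ε| := by
  rw [phi]
  apply Real.sqrt_le_iff.2
  constructor
  · nlinarith [abs_nonneg y, abs_nonneg ε, sq_abs y, sq_abs ε, abs_mul y ε]
  · nlinarith [sq_abs y, sq_abs ε, abs_nonneg y, abs_nonneg ε]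

lemma contDiff_psi (hε : ε ≠ 0) : ContDiff ℝ (⊤ : ℕ∞) (psi ε) := by
  apply ContDiff.div contDiff_id
  · exact ((contDiff_id.pow 2).add contDiff_const).sqrt fun x => (sq_add_pos hε x).ne'
  · exact fun x => (sqrt_pos' hε x).ne'

end NeumannAux

namespace NeumannAux

noncomputable def dx1 (F : (ℝ×ℝ)×ℝ → ℝ) (q : (ℝ×ℝ)×ℝ) : ℝ := fderiv ℝ F q ((1,0),0)
noncomputable def dx2 (F : (ℝ×ℝ)×ℝ → ℝ) (q : (ℝ×ℝ)×ℝ) : ℝ := fderiv ℝ F q ((0,1),0)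
noncomputable def dt' (F : (ℝ×ℝ)×ℝ → ℝ) (q : (ℝ×ℝ)×ℝ) : ℝ := fderiv ℝ F q ((0,0),1)

variable {F : (ℝ×ℝ)×ℝ → ℝ}

lemma contDiff_dx1 (hF : ContDiff ℝ (⊤ : ℕ∞) F) : ContDiff ℝ (⊤ : ℕ∞) (dx1 F) :=
  (hF.fderiv_right (by simp)).clm_apply contDiff_const

lemma contDiff_dx2 (hF : ContDiff ℝ (⊤ : ℕ∞) F) : ContDiff ℝ (⊤ : ℕ∞) (dx2 F) :=
  (hF.fderiv_right (by simp)).clm_apply contDiff_const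

lemma contDiff_dt' (hF : ContDiff ℝ (⊤ : ℕ∞) F) : ContDiff ℝ (⊤ : ℕ∞) (dt' F) :=
  (hF.fderiv_right (by simp)).clm_apply contDiff_const

lemma hasDerivAt_slice1 (hF : ContDiff ℝ (⊤ : ℕ∞) F) (x : ℝ×ℝ) (t : ℝ) :
    HasDerivAt (fun s => F ((s, x.2), t)) (dx1 F (x,t)) x.1 := by
  have hL : HasDerivAt (fun s : ℝ => ((s, x.2), t)) (((1:ℝ),(0:ℝ)),(0:ℝ)) x.1 :=
    ((hasDerivAt_id x.1).prodMk (hasDerivAt_const _ x.2)).prodMk (hasDerivAt_const _ t)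
  exact (hF.differentiable (by simp) ((x,t))).hasFDerivAt.comp_hasDerivAt x.1 hL

lemma hasDerivAt_slice2 (hF : ContDiff ℝ (⊤ : ℕ∞) F) (x : ℝ×ℝ) (t : ℝ) :
    HasDerivAt (fun s => F ((x.1, s), t)) (dx2 F (x,t)) x.2 := by
  have hL : HasDerivAt (fun s : ℝ => ((x.1, s), t)) (((0:ℝ),(1:ℝ)),(0:ℝ)) x.2 :=
    ((hasDerivAt_const _ x.1).prodMk (hasDerivAt_id x.2)).prodMk (hasDerivAt_const _ t)
  exact (hF.differentiable (by simp) ((x,t))).hasFDerivAt.comp_hasDerivAt x.2 hL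

lemma hasDerivAt_slicet (hF : ContDiff ℝ (⊤ : ℕ∞) F) (x : ℝ×ℝ) (t : ℝ) :
    HasDerivAt (fun s => F (x, s)) (dt' F (x,t)) t := by
  have hL : HasDerivAt (fun s : ℝ => (x, s)) (((0:ℝ),(0:ℝ)),(1:ℝ)) t :=
    (hasDerivAt_const _ x).prodMk (hasDerivAt_id t)
  exact (hF.differentiable (by simp) ((x,t))).hasFDerivAt.comp_hasDerivAt t hL

lemma hasFDerivAt_slice (hF : ContDiff ℝ (⊤ : ℕ∞) F) (x : ℝ×ℝ) (t : ℝ) :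
    HasFDerivAt (fun y => F (y,t))
      ((fderiv ℝ F (x,t)).comp (ContinuousLinearMap.inl ℝ (ℝ×ℝ) ℝ)) x := by
  have hL : HasFDerivAt (fun y : ℝ×ℝ => (y, t)) (ContinuousLinearMap.inl ℝ (ℝ×ℝ) ℝ) x :=
    hasFDerivAt_prodMk_left x t
  exact (hF.differentiable (by simp) ((x,t))).hasFDerivAt.comp x hL

lemma fderiv_slice (hF : ContDiff ℝ (⊤ : ℕ∞) F) (x : ℝ×ℝ) (t : ℝ) (v : ℝ×ℝ) :
    fderiv ℝ (fun y => F (y,t)) x v = fderiv ℝ F (x,t) (v, 0) := by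
  rw [(hasFDerivAt_slice hF x t).fderiv]; rfl

lemma contDiff_slice (hF : ContDiff ℝ (⊤ : ℕ∞) F) (t : ℝ) : ContDiff ℝ (⊤ : ℕ∞) (fun y : ℝ×ℝ => F (y,t)) :=
  hF.comp (contDiff_id.prodMk contDiff_const)

end NeumannAux
namespace NeumannAux

lemma clm_expand (L : ℝ × ℝ →L[ℝ] ℝ) (a b : ℝ) : L (a, b) = a * L (1, 0) + b * L (0, 1) := by
  have h : ((a,b) : ℝ×ℝ) = a • ((1:ℝ),(0:ℝ)) + b • ((0:ℝ),(1:ℝ)) := by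
    simp [Prod.ext_iff]
  rw [h, map_add, L.map_smul, L.map_smul, smul_eq_mul, smul_eq_mul]

variable {H : ℝ×ℝ → ℝ}

lemma hasDerivAt_pslice1 (hH : ContDiff ℝ (⊤ : ℕ∞) H) (a b : ℝ) :
    HasDerivAt (fun s => H (s, b)) (fderiv ℝ H (a,b) (1, 0)) a := by
  have hL : HasDerivAt (fun s : ℝ => (s, b)) ((1:ℝ),(0:ℝ)) a :=
    (hasDerivAt_id a).prodMk (hasDerivAt_const _ b)
  exact (hH.differentiable (by simp) (a,b)).hasFDerivAt.comp_hasDerivAt a hL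

lemma hasDerivAt_pslice2 (hH : ContDiff ℝ (⊤ : ℕ∞) H) (a b : ℝ) :
    HasDerivAt (fun s => H (a, s)) (fderiv ℝ H (a,b) (0, 1)) b := by
  have hL : HasDerivAt (fun s : ℝ => (a, s)) ((0:ℝ),(1:ℝ)) b :=
    (hasDerivAt_const _ a).prodMk (hasDerivAt_id b)
  exact (hH.differentiable (by simp) (a,b)).hasFDerivAt.comp_hasDerivAt b hL

lemma pd1_eq (hH : ContDiff ℝ (⊤ : ℕ∞) H) (x : ℝ×ℝ) : pd1 H x = fderiv ℝ H x (1, 0) :=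
  (hasDerivAt_pslice1 hH x.1 x.2).deriv

lemma pd2_eq (hH : ContDiff ℝ (⊤ : ℕ∞) H) (x : ℝ×ℝ) : pd2 H x = fderiv ℝ H x (0, 1) :=
  (hasDerivAt_pslice2 hH x.1 x.2).deriv

/-- The pointwise polar divergence identity. -/
lemma polar_div_identity (f g : ℝ×ℝ → ℝ) (hf : ContDiff ℝ (⊤ : ℕ∞) f) (hg : ContDiff ℝ (⊤ : ℕ∞) g) (p : ℝ×ℝ) :
    fderiv ℝ (fun q : ℝ×ℝ => q.1 * (Real.cos q.2 * f (q.1 * Real.cos q.2, q.1 * Real.sin q.2)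
        + Real.sin q.2 * g (q.1 * Real.cos q.2, q.1 * Real.sin q.2))) p (1,0)
      + fderiv ℝ (fun q : ℝ×ℝ => -Real.sin q.2 * f (q.1 * Real.cos q.2, q.1 * Real.sin q.2)
        + Real.cos q.2 * g (q.1 * Real.cos q.2, q.1 * Real.sin q.2)) p (0,1)
    = p.1 * (fderiv ℝ f (p.1 * Real.cos p.2, p.1 * Real.sin p.2) (1,0)
        + fderiv ℝ g (p.1 * Real.cos p.2, p.1 * Real.sin p.2) (0,1)) := by
  obtain ⟨r, θ⟩ := p
  set c := Real.cos θ; set s := Real.sin θ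
  set P : ℝ×ℝ := (r * c, r * s) with hP
  -- r-slice derivative of F
  have hPr : HasDerivAt (fun r : ℝ => (r * c, r * s)) ((c, s) : ℝ×ℝ) r := by
    simpa using ((hasDerivAt_id r).mul_const c).prodMk ((hasDerivAt_id r).mul_const s)
  have hfPr : HasDerivAt (fun r : ℝ => f (r * c, r * s)) (fderiv ℝ f P (c, s)) r :=
    (hf.differentiable (by simp) P).hasFDerivAt.comp_hasDerivAt r hPr
  have hgPr : HasDerivAt (fun r : ℝ => g (r * c, r * s)) (fderiv ℝ g P (c, s)) r :=
    (hg.differentiable (by simp) P).hasFDerivAt.comp_hasDerivAt r hPr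
  have hF : HasDerivAt (fun r : ℝ => r * (c * f (r * c, r * s) + s * g (r * c, r * s)))
      (1 * (c * f P + s * g P) + r * (c * fderiv ℝ f P (c, s) + s * fderiv ℝ g P (c, s))) r :=
    (hasDerivAt_id r).mul ((hfPr.const_mul c).add (hgPr.const_mul s))
  -- θ-slice derivative of G
  have hPθ : HasDerivAt (fun θ : ℝ => (r * Real.cos θ, r * Real.sin θ))
      ((-(r * s), r * c) : ℝ×ℝ) θ := by
    have h1 : HasDerivAt (fun θ : ℝ => r * Real.cos θ) (-(r * s)) θ := by
      simpa [mul_comm, mul_assoc, mul_left_comm] using (Real.hasDerivAt_cos θ).const_mul r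
    have h2 : HasDerivAt (fun θ : ℝ => r * Real.sin θ) (r * c) θ :=
      (Real.hasDerivAt_sin θ).const_mul r
    exact h1.prodMk h2
  have hfPθ : HasDerivAt (fun θ : ℝ => f (r * Real.cos θ, r * Real.sin θ))
      (fderiv ℝ f P (-(r * s), r * c)) θ :=
    (hf.differentiable (by simp) P).hasFDerivAt.comp_hasDerivAt θ hPθ
  have hgPθ : HasDerivAt (fun θ : ℝ => g (r * Real.cos θ, r * Real.sin θ))
      (fderiv ℝ g P (-(r * s), r * c)) θ :=
    (hg.differentiable (by simp) P).hasFDerivAt.comp_hasDerivAt θ hPθ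
  have hG : HasDerivAt (fun θ : ℝ => -Real.sin θ * f (r * Real.cos θ, r * Real.sin θ)
      + Real.cos θ * g (r * Real.cos θ, r * Real.sin θ))
      ((-c * f P + -s * fderiv ℝ f P (-(r * s), r * c))
        + (-s * g P + c * fderiv ℝ g P (-(r * s), r * c))) θ := by
    have hsin : HasDerivAt (fun θ : ℝ => -Real.sin θ) (-c) θ := (Real.hasDerivAt_sin θ).neg
    have hcos : HasDerivAt Real.cos (-s) θ := Real.hasDerivAt_cos θ
    exact (hsin.mul hfPθ).add (hcos.mul hgPθ)
  -- the functions F, G are smooth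
  have hpolar : ContDiff ℝ (⊤ : ℕ∞) (fun q : ℝ×ℝ => (q.1 * Real.cos q.2, q.1 * Real.sin q.2)) :=
    (contDiff_fst.mul (Real.contDiff_cos.comp contDiff_snd)).prodMk
      (contDiff_fst.mul (Real.contDiff_sin.comp contDiff_snd))
  have hFs : ContDiff ℝ (⊤ : ℕ∞) (fun q : ℝ×ℝ => q.1 * (Real.cos q.2 * f (q.1 * Real.cos q.2, q.1 * Real.sin q.2)
        + Real.sin q.2 * g (q.1 * Real.cos q.2, q.1 * Real.sin q.2))) :=
    contDiff_fst.mul (((Real.contDiff_cos.comp contDiff_snd).mul (hf.comp hpolar)).add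
      ((Real.contDiff_sin.comp contDiff_snd).mul (hg.comp hpolar)))
  have hGs : ContDiff ℝ (⊤ : ℕ∞) (fun q : ℝ×ℝ => -Real.sin q.2 * f (q.1 * Real.cos q.2, q.1 * Real.sin q.2)
        + Real.cos q.2 * g (q.1 * Real.cos q.2, q.1 * Real.sin q.2)) :=
    (((Real.contDiff_sin.comp contDiff_snd).neg).mul (hf.comp hpolar)).add
      ((Real.contDiff_cos.comp contDiff_snd).mul (hg.comp hpolar))
  have e1 := (hasDerivAt_pslice1 hFs r θ).unique hF
  have e2 := (hasDerivAt_pslice2 hGs r θ).unique hG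
  rw [e1, e2, clm_expand (fderiv ℝ f P) c s, clm_expand (fderiv ℝ g P) c s,
    clm_expand (fderiv ℝ f P) (-(r*s)) (r*c), clm_expand (fderiv ℝ g P) (-(r*s)) (r*c)]
  have htrig : c^2 + s^2 = 1 := Real.cos_sq_add_sin_sq θ
  have hfst : (((r,θ) : ℝ×ℝ).1 : ℝ) = r := rfl
  rw [hfst]
  linear_combination (r * fderiv ℝ f P (1,0) + r * fderiv ℝ g P (0,1)) * htrig

end NeumannAux

open Real in
lemma measure_Icc_diff_Ioo_prod (a b c d : ℝ) :
    (Ioo a b ×ˢ Ioo c d : Set (ℝ×ℝ)) =ᵐ[volume] (Icc a b ×ˢ Icc c d : Set (ℝ×ℝ)) := by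
  rw [MeasureTheory.ae_eq_set]
  constructor
  · rw [diff_eq_empty.2 (Set.prod_mono Ioo_subset_Icc_self Ioo_subset_Icc_self)]
    exact measure_empty
  · apply measure_mono_null (t := ((Icc a b \ Ioo a b) ×ˢ (univ : Set ℝ)) ∪
      ((univ : Set ℝ) ×ˢ (Icc c d \ Ioo c d)))
    · rintro ⟨x, y⟩ ⟨⟨hx, hy⟩, hn⟩
      by_cases h1 : x ∈ Ioo a b
      · right
        refine ⟨trivial, hy, fun h2 => hn ⟨h1, h2⟩⟩
      · left
        exact ⟨⟨hx, h1⟩, trivial⟩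
    · apply measure_union_null
      · rw [Measure.volume_eq_prod, Measure.prod_prod]
        have : volume (Icc a b \ Ioo a b) = 0 := by
          apply measure_mono_null (t := ({a, b} : Set ℝ))
          · intro x ⟨hx1, hx2⟩
            simp only [mem_Ioo, not_and_or, not_lt] at hx2
            rcases hx2 with h | h
            · exact Or.inl (le_antisymm h hx1.1)
            · exact Or.inr (le_antisymm hx1.2 h)
          · exact measure_union_null (measure_singleton a) (measure_singleton b)
        rw [this, zero_mul]
      · rw [Measure.volume_eq_prod, Measure.prod_prod]
        have : volume (Icc c d \ Ioo c d) = 0 := by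
          apply measure_mono_null (t := ({c, d} : Set ℝ))
          · intro x ⟨hx1, hx2⟩
            simp only [mem_Ioo, not_and_or, not_lt] at hx2
            rcases hx2 with h | h
            · exact Or.inl (le_antisymm h hx1.1)
            · exact Or.inr (le_antisymm hx1.2 h)
          · exact measure_union_null (measure_singleton c) (measure_singleton d)
        rw [this, mul_zero]

open Real in
theorem div_disk (f g : ℝ×ℝ → ℝ) (hf : ContDiff ℝ (⊤ : ℕ∞) f) (hg : ContDiff ℝ (⊤ : ℕ∞) g) :
    (∫ x in disk, (fderiv ℝ f x (1,0) + fderiv ℝ g x (0,1))) =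
      ∫ θ in (-π)..π, (cos θ * f (cos θ, sin θ) + sin θ * g (cos θ, sin θ)) := by
  have hOpen : IsOpen disk := by
    have : Continuous fun x : ℝ×ℝ => x.1^2 + x.2^2 := by continuity
    exact isOpen_lt this continuous_const
  have hmeas : MeasurableSet disk := hOpen.measurableSet
  set dv : ℝ×ℝ → ℝ := fun x => fderiv ℝ f x (1,0) + fderiv ℝ g x (0,1) with hdv
  have hdvS : ContDiff ℝ (⊤ : ℕ∞) dv :=
    ((hf.fderiv_right (by simp)).clm_apply contDiff_const).add
      ((hg.fderiv_right (by simp)).clm_apply contDiff_const)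
  have hdvc : Continuous dv := hdvS.continuous
  set F : ℝ×ℝ → ℝ := fun q => q.1 * (cos q.2 * f (q.1 * cos q.2, q.1 * sin q.2)
        + sin q.2 * g (q.1 * cos q.2, q.1 * sin q.2)) with hF
  set G : ℝ×ℝ → ℝ := fun q => -sin q.2 * f (q.1 * cos q.2, q.1 * sin q.2)
        + cos q.2 * g (q.1 * cos q.2, q.1 * sin q.2) with hG
  have hpolar : ContDiff ℝ (⊤ : ℕ∞) (fun q : ℝ×ℝ => (q.1 * cos q.2, q.1 * sin q.2)) :=
    (contDiff_fst.mul (Real.contDiff_cos.comp contDiff_snd)).prodMk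
      (contDiff_fst.mul (Real.contDiff_sin.comp contDiff_snd))
  have hFs : ContDiff ℝ (⊤ : ℕ∞) F :=
    contDiff_fst.mul (((Real.contDiff_cos.comp contDiff_snd).mul (hf.comp hpolar)).add
      ((Real.contDiff_sin.comp contDiff_snd).mul (hg.comp hpolar)))
  have hGs : ContDiff ℝ (⊤ : ℕ∞) G :=
    (((Real.contDiff_sin.comp contDiff_snd).neg).mul (hf.comp hpolar)).add
      ((Real.contDiff_cos.comp contDiff_snd).mul (hg.comp hpolar))
  -- Step A : polar change of variables
  have stepA : (∫ x in disk, dv x)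
      = ∫ p in Ioo (0:ℝ) 1 ×ˢ Ioo (-π) π, p.1 * dv (p.1 * cos p.2, p.1 * sin p.2) := by
    rw [← integral_indicator hmeas, ← integral_comp_polarCoord_symm (disk.indicator dv)]
    have h1 : ∀ p ∈ polarCoord.target,
        p.1 • (disk.indicator dv) (polarCoord.symm p)
        = indicator (Ioo (0:ℝ) 1 ×ˢ Ioo (-π) π)
            (fun p : ℝ×ℝ => p.1 * dv (p.1 * cos p.2, p.1 * sin p.2)) p := by
      rintro ⟨r, θ⟩ hp
      rw [polarCoord_target] at hp
      obtain ⟨hr, hθ⟩ := hp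
      simp only [mem_Ioi] at hr
      have hsymm : polarCoord.symm (r, θ) = (r * cos θ, r * sin θ) := polarCoord_symm_apply _
      have hrr : (r * cos θ)^2 + (r * sin θ)^2 = r^2 := by
        linear_combination r^2 * Real.cos_sq_add_sin_sq θ
      have hmem : (r * cos θ, r * sin θ) ∈ disk ↔ r < 1 := by
        simp only [disk, mem_setOf_eq]
        rw [hrr]
        constructor
        · intro h; nlinarith
        · intro h; nlinarith
      by_cases h : r < 1
      · rw [hsymm, indicator_of_mem (hmem.2 h), indicator_of_mem (by exact ⟨⟨hr, h⟩, hθ⟩)]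
        rfl
      · rw [hsymm, indicator_of_notMem (fun hc => h (hmem.1 hc)),
          indicator_of_notMem (fun hc => h hc.1.2), smul_zero]
    rw [setIntegral_congr_fun polarCoord.open_target.measurableSet h1,
      setIntegral_indicator (measurableSet_Ioo.prod measurableSet_Ioo),
      polarCoord_target,
      inter_eq_self_of_subset_right (Set.prod_mono Ioo_subset_Ioi_self subset_rfl)]
  -- Step B : pass to the closed rectangle
  have stepB : (∫ p in Ioo (0:ℝ) 1 ×ˢ Ioo (-π) π, p.1 * dv (p.1 * cos p.2, p.1 * sin p.2))
      = ∫ p in Icc ((0:ℝ),(-π)) ((1:ℝ),π), p.1 * dv (p.1 * cos p.2, p.1 * sin p.2) := by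
    rw [Icc_prod_eq]
    exact setIntegral_congr_set (measure_Icc_diff_Ioo_prod 0 1 (-π) π)
  -- Step C : rectangle divergence theorem
  have key : ∀ p : ℝ×ℝ, fderiv ℝ F p (1,0) + fderiv ℝ G p (0,1)
      = p.1 * dv (p.1 * cos p.2, p.1 * sin p.2) := fun p =>
    NeumannAux.polar_div_identity f g hf hg p
  have stepC := integral_divergence_prod_Icc_of_hasFDerivAt_off_countable_of_le
    F G (fderiv ℝ F) (fderiv ℝ G) ((0:ℝ),(-π)) ((1:ℝ),π)
    (by constructor <;> simp [Real.pi_pos.le])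
    ∅ countable_empty hFs.continuous.continuousOn hGs.continuous.continuousOn
    (fun x _ => (hFs.differentiable (by simp) x).hasFDerivAt)
    (fun x _ => (hGs.differentiable (by simp) x).hasFDerivAt)
    (by
      apply ContinuousOn.integrableOn_compact isCompact_Icc
      have h : ContDiff ℝ (⊤ : ℕ∞) (fun x : ℝ×ℝ => fderiv ℝ F x (1,0) + fderiv ℝ G x (0,1)) :=
        ((hFs.fderiv_right (by simp)).clm_apply contDiff_const).add
          ((hGs.fderiv_right (by simp)).clm_apply contDiff_const)
      exact h.continuous.continuousOn)
  simp_rw [key] at stepC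
  rw [stepA, stepB, stepC]
  -- Step D : boundary terms
  have hG_eq : ∀ r ∈ uIcc (0:ℝ) 1, G (r, π) = G (r, -π) := by
    intro r _
    simp [hG, Real.sin_pi, Real.cos_pi, Real.sin_neg, Real.cos_neg]
  have hGdiff : (∫ r in (0:ℝ)..1, G (r, π)) - ∫ r in (0:ℝ)..1, G (r, -π) = 0 := by
    rw [intervalIntegral.integral_congr hG_eq, sub_self]
  have hF0 : (∫ θ in (-π)..π, F (0, θ)) = 0 := by
    have : ∀ θ ∈ uIcc (-π) π, F ((0:ℝ), θ) = 0 := by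
      intro θ _; simp [hF]
    rw [intervalIntegral.integral_congr this, intervalIntegral.integral_zero]
  have hF1 : ∀ θ ∈ uIcc (-π) π, F ((1:ℝ), θ) = cos θ * f (cos θ, sin θ) + sin θ * g (cos θ, sin θ) := by
    intro θ _; simp [hF]
  calc (((∫ r in (0:ℝ)..1, G (r, π)) - ∫ r in (0:ℝ)..1, G (r, -π))
        + ∫ θ in (-π)..π, F (1, θ)) - ∫ θ in (-π)..π, F (0, θ)
      = ∫ θ in (-π)..π, F (1, θ) := by rw [hGdiff, hF0, zero_add, sub_zero]
    _ = _ := intervalIntegral.integral_congr hF1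

namespace NeumannAux

variable {W : (ℝ×ℝ)×ℝ → ℝ} {ε : ℝ}

lemma contDiff_a1 (hW : ContDiff ℝ (⊤ : ℕ∞) W) (t : ℝ) : ContDiff ℝ (⊤ : ℕ∞) (fun y : ℝ×ℝ => dx1 W (y,t)) :=
  (contDiff_dx1 hW).comp (contDiff_id.prodMk contDiff_const)

lemma contDiff_a2 (hW : ContDiff ℝ (⊤ : ℕ∞) W) (t : ℝ) : ContDiff ℝ (⊤ : ℕ∞) (fun y : ℝ×ℝ => dx2 W (y,t)) :=
  (contDiff_dx2 hW).comp (contDiff_id.prodMk contDiff_const)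

lemma contDiff_v1 (hε : ε ≠ 0) (hW : ContDiff ℝ (⊤ : ℕ∞) W) (t : ℝ) :
    ContDiff ℝ (⊤ : ℕ∞) (fun y : ℝ×ℝ => psi ε (W (y,t)) * dx1 W (y,t)) :=
  ((contDiff_psi hε).comp (contDiff_slice hW t)).mul (contDiff_a1 hW t)

lemma contDiff_v2 (hε : ε ≠ 0) (hW : ContDiff ℝ (⊤ : ℕ∞) W) (t : ℝ) :
    ContDiff ℝ (⊤ : ℕ∞) (fun y : ℝ×ℝ => psi ε (W (y,t)) * dx2 W (y,t)) :=
  ((contDiff_psi hε).comp (contDiff_slice hW t)).mul (contDiff_a2 hW t)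

lemma fderiv_v1 (hε : ε ≠ 0) (hW : ContDiff ℝ (⊤ : ℕ∞) W) (t : ℝ) (x : ℝ×ℝ) :
    fderiv ℝ (fun y : ℝ×ℝ => psi ε (W (y,t)) * dx1 W (y,t)) x (1,0)
      = chi ε (W (x,t)) * dx1 W (x,t) * dx1 W (x,t)
        + psi ε (W (x,t)) * fderiv ℝ (fun y : ℝ×ℝ => dx1 W (y,t)) x (1,0) := by
  have h1 : HasDerivAt (fun s => W ((s, x.2), t)) (dx1 W (x,t)) x.1 := hasDerivAt_slice1 hW x t
  have h2 : HasDerivAt (fun s => psi ε (W ((s,x.2), t))) (chi ε (W (x,t)) * dx1 W (x,t)) x.1 :=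
    (hasDerivAt_psi hε _).comp x.1 h1
  have h3 : HasDerivAt (fun s => dx1 W ((s, x.2), t))
      (fderiv ℝ (fun y : ℝ×ℝ => dx1 W (y,t)) x (1,0)) x.1 :=
    hasDerivAt_pslice1 (contDiff_a1 hW t) x.1 x.2
  exact (hasDerivAt_pslice1 (contDiff_v1 hε hW t) x.1 x.2).unique (h2.mul h3)

lemma fderiv_v2 (hε : ε ≠ 0) (hW : ContDiff ℝ (⊤ : ℕ∞) W) (t : ℝ) (x : ℝ×ℝ) :
    fderiv ℝ (fun y : ℝ×ℝ => psi ε (W (y,t)) * dx2 W (y,t)) x (0,1)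
      = chi ε (W (x,t)) * dx2 W (x,t) * dx2 W (x,t)
        + psi ε (W (x,t)) * fderiv ℝ (fun y : ℝ×ℝ => dx2 W (y,t)) x (0,1) := by
  have h1 : HasDerivAt (fun s => W ((x.1, s), t)) (dx2 W (x,t)) x.2 := hasDerivAt_slice2 hW x t
  have h2 : HasDerivAt (fun s => psi ε (W ((x.1, s), t))) (chi ε (W (x,t)) * dx2 W (x,t)) x.2 :=
    (hasDerivAt_psi hε _).comp x.2 h1
  have h3 : HasDerivAt (fun s => dx2 W ((x.1, s), t))
      (fderiv ℝ (fun y : ℝ×ℝ => dx2 W (y,t)) x (0,1)) x.2 :=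
    hasDerivAt_pslice2 (contDiff_a2 hW t) x.1 x.2
  exact (hasDerivAt_pslice2 (contDiff_v2 hε hW t) x.1 x.2).unique (h2.mul h3)

end NeumannAux


open NeumannAux

/-- Uniform-in-`ν` `L¹` estimate for the heat equation on the unit disk with
Neumann boundary data `∂ω/∂n = α'(t)/(2πν)`:
`∫_D |ω(·,t)| ≤ ∫_D |ω(·,0)| + ∫₀^t |α'(s)| ds`. -/
theorem neumann_heat_L1_estimate
    (ν : ℝ) (hν : 0 < ν)
    (α : ℝ → ℝ) (hα : ContDiff ℝ (⊤ : ℕ∞) α)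
    (ω : ℝ × ℝ → ℝ → ℝ)
    (hsmooth : ContDiff ℝ (⊤ : ℕ∞) (fun q : (ℝ × ℝ) × ℝ => ω q.1 q.2))
    (hheat : ∀ x ∈ disk, ∀ t > (0:ℝ), deriv (ω x) t = ν * lap (fun y => ω y t) x)
    (hneumann : ∀ x : ℝ × ℝ, x.1 ^ 2 + x.2 ^ 2 = 1 → ∀ t ≥ (0:ℝ),
      x.1 * pd1 (fun y => ω y t) x + x.2 * pd2 (fun y => ω y t) x
        = deriv α t / (2 * Real.pi * ν)) :
    ∀ t > (0:ℝ),
      (∫ x in disk, |ω x t|) ≤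
        (∫ x in disk, |ω x 0|) + ∫ s in (0:ℝ)..t, |deriv α s| := by
  intro t₀ ht₀
  set Wf : (ℝ×ℝ)×ℝ → ℝ := fun q => ω q.1 q.2 with hWfdef
  have hWs : ContDiff ℝ (⊤ : ℕ∞) Wf := hsmooth
  -- disk facts
  have hOpen : IsOpen disk :=
    isOpen_lt ((continuous_fst.pow 2).add (continuous_snd.pow 2)) continuous_const
  have hmeas : MeasurableSet disk := hOpen.measurableSet
  have hsub : disk ⊆ Metric.closedBall (0:ℝ×ℝ) 1 := by
    intro x hx
    have hx' : x.1^2 + x.2^2 < 1 := hx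
    rw [mem_closedBall_zero_iff, Prod.norm_def]
    have h1 : |x.1| ≤ 1 := (sq_le_one_iff_abs_le_one x.1).1 (by nlinarith [sq_nonneg x.2])
    have h2 : |x.2| ≤ 1 := (sq_le_one_iff_abs_le_one x.2).1 (by nlinarith [sq_nonneg x.1])
    simp only [Real.norm_eq_abs]
    exact max_le h1 h2
  have hcomp : IsCompact (Metric.closedBall (0:ℝ×ℝ) 1) := isCompact_closedBall _ _
  have hvol : volume disk < ⊤ := lt_of_le_of_lt (measure_mono hsub) hcomp.measure_lt_top
  have intg : ∀ {f : ℝ×ℝ → ℝ}, Continuous f → IntegrableOn f disk volume := fun hf =>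
    ((hf.continuousOn).integrableOn_compact hcomp).mono_set hsub
  have hc : ∀ t : ℝ, Continuous (fun x : ℝ×ℝ => ω x t) := fun t =>
    (contDiff_slice hWs t).continuous
  have hαc : Continuous (deriv α) := hα.continuous_deriv (by simp)
  have habsc : Continuous (fun s => |deriv α s|) := hαc.abs
  -- main estimate for the regularized absolute value
  have main : ∀ ε : ℝ, 0 < ε →
      (∫ x in disk, phi ε (ω x t₀)) ≤ (∫ x in disk, phi ε (ω x 0))
        + ∫ s in (0:ℝ)..t₀, |deriv α s| := by
    intro ε hε0
    have hε : ε ≠ 0 := hε0.ne'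
    have hphic : ∀ t : ℝ, Continuous (fun x : ℝ×ℝ => phi ε (ω x t)) := fun t =>
      Real.continuous_sqrt.comp ((((hc t).pow 2)).add continuous_const)
    -- derivative of the regularized mass
    have hGd : ∀ t₁ : ℝ, HasDerivAt (fun t => ∫ x in disk, phi ε (ω x t))
        (∫ x in disk, psi ε (ω x t₁) * dt' Wf (x,t₁)) t₁ := by
      intro t₁
      have hdtc : Continuous (dt' Wf) := (contDiff_dt' hWs).continuous
      obtain ⟨C, hC⟩ := (hcomp.prod (isCompact_Icc (a := t₁ - 1) (b := t₁ + 1))).exists_bound_of_continuousOn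
        hdtc.continuousOn
      have hK : ∀ x ∈ disk, ∀ t ∈ Metric.ball t₁ 1, ‖dt' Wf (x,t)‖ ≤ C := by
        intro x hx t ht
        apply hC
        refine ⟨hsub hx, ?_⟩
        have h := abs_lt.1 (by simpa [Real.dist_eq] using Metric.mem_ball.1 ht)
        exact ⟨by linarith [h.1], by linarith [h.2]⟩
      have hC0 : 0 ≤ C :=
        le_trans (norm_nonneg _) (hC ((0:ℝ×ℝ), t₁) ⟨Metric.mem_closedBall_self zero_le_one,
          by constructor <;> linarith⟩)
      have hψc : Continuous (fun x : ℝ×ℝ => psi ε (ω x t₁) * dt' Wf (x,t₁)) := by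
        have h : ContDiff ℝ (⊤ : ℕ∞) (fun x : ℝ×ℝ => psi ε (Wf (x,t₁)) * dt' Wf (x,t₁)) :=
          ((contDiff_psi hε).comp (contDiff_slice hWs t₁)).mul
            ((contDiff_dt' hWs).comp (contDiff_id.prodMk contDiff_const))
        exact h.continuous
      have hder := hasDerivAt_integral_of_dominated_loc_of_deriv_le
        (F := fun t x => phi ε (ω x t))
        (F' := fun t x => psi ε (ω x t) * dt' Wf (x,t))
        (bound := fun _ => C) (μ := volume.restrict disk) (x₀ := t₁) (Metric.ball_mem_nhds t₁ one_pos)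
        (.of_forall fun t => ((hphic t).aestronglyMeasurable))
        (intg (hphic t₁))
        hψc.aestronglyMeasurable
        (by
          rw [ae_restrict_iff' hmeas]
          refine .of_forall fun x hx t ht => ?_
          rw [norm_mul]
          calc ‖psi ε (ω x t)‖ * ‖dt' Wf (x,t)‖
              ≤ 1 * C := by
                apply mul_le_mul _ (hK x hx t ht) (norm_nonneg _) zero_le_one
                rw [Real.norm_eq_abs]; exact abs_psi_le ε _
            _ = C := one_mul C)
        (integrableOn_const hvol.ne)
        (by
          rw [ae_restrict_iff' hmeas]
          refine .of_forall fun x _ t _ => ?_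
          exact (hasDerivAt_phi hε (ω x t)).comp t (hasDerivAt_slicet hWs x t))
      exact hder.2
    -- the key dissipation bound
    have key : ∀ t, 0 < t →
        (∫ x in disk, psi ε (ω x t) * dt' Wf (x,t)) ≤ |deriv α t| := by
      intro t ht
      have hpd1 : ∀ x : ℝ×ℝ, pd1 (fun y => ω y t) x = dx1 Wf (x,t) := fun x => by
        rw [pd1_eq (contDiff_slice hWs t)]
        exact fderiv_slice hWs x t (1,0)
      have hpd2 : ∀ x : ℝ×ℝ, pd2 (fun y => ω y t) x = dx2 Wf (x,t) := fun x => by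
        rw [pd2_eq (contDiff_slice hWs t)]
        exact fderiv_slice hWs x t (0,1)
      have ha1 : ContDiff ℝ (⊤ : ℕ∞) (fun y : ℝ×ℝ => dx1 Wf (y,t)) := contDiff_a1 hWs t
      have ha2 : ContDiff ℝ (⊤ : ℕ∞) (fun y : ℝ×ℝ => dx2 Wf (y,t)) := contDiff_a2 hWs t
      have hlap : ∀ x : ℝ×ℝ, lap (fun y => ω y t) x
          = fderiv ℝ (fun y : ℝ×ℝ => dx1 Wf (y,t)) x (1,0)
            + fderiv ℝ (fun y : ℝ×ℝ => dx2 Wf (y,t)) x (0,1) := by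
        intro x
        have e1 : pd1 (fun y => ω y t) = fun y : ℝ×ℝ => dx1 Wf (y,t) := funext hpd1
        have e2 : pd2 (fun y => ω y t) = fun y : ℝ×ℝ => dx2 Wf (y,t) := funext hpd2
        simp only [lap]
        rw [e1, e2, pd1_eq ha1, pd2_eq ha2]
      have hv1s : ContDiff ℝ (⊤ : ℕ∞) (fun y : ℝ×ℝ => psi ε (Wf (y,t)) * dx1 Wf (y,t)) :=
        contDiff_v1 hε hWs t
      have hv2s : ContDiff ℝ (⊤ : ℕ∞) (fun y : ℝ×ℝ => psi ε (Wf (y,t)) * dx2 Wf (y,t)) :=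
        contDiff_v2 hε hWs t
      set v1 : ℝ×ℝ → ℝ := fun y => psi ε (Wf (y,t)) * dx1 Wf (y,t) with hv1def
      set v2 : ℝ×ℝ → ℝ := fun y => psi ε (Wf (y,t)) * dx2 Wf (y,t) with hv2def
      have hpoint : ∀ x ∈ disk, psi ε (ω x t) * dt' Wf (x,t)
          ≤ ν * (fderiv ℝ v1 x (1,0) + fderiv ℝ v2 x (0,1)) := by
        intro x hx
        have hdt : dt' Wf (x,t) = deriv (ω x) t := ((hasDerivAt_slicet hWs x t).deriv).symm
        have hfv1 : fderiv ℝ v1 x (1,0) = chi ε (ω x t) * dx1 Wf (x,t) * dx1 Wf (x,t)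
            + psi ε (ω x t) * fderiv ℝ (fun y : ℝ×ℝ => dx1 Wf (y,t)) x (1,0) :=
          fderiv_v1 hε hWs t x
        have hfv2 : fderiv ℝ v2 x (0,1) = chi ε (ω x t) * dx2 Wf (x,t) * dx2 Wf (x,t)
            + psi ε (ω x t) * fderiv ℝ (fun y : ℝ×ℝ => dx2 Wf (y,t)) x (0,1) :=
          fderiv_v2 hε hWs t x
        rw [hfv1, hfv2, hdt, hheat x hx t ht, hlap x]
        have hχ := chi_nonneg ε (ω x t)
        nlinarith [mul_nonneg (mul_nonneg hν.le hχ) (mul_self_nonneg (dx1 Wf (x,t))),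
          mul_nonneg (mul_nonneg hν.le hχ) (mul_self_nonneg (dx2 Wf (x,t)))]
      have hcont1 : Continuous (fun x : ℝ×ℝ => psi ε (ω x t) * dt' Wf (x,t)) := by
        have h : ContDiff ℝ (⊤ : ℕ∞) (fun x : ℝ×ℝ => psi ε (Wf (x,t)) * dt' Wf (x,t)) :=
          ((contDiff_psi hε).comp (contDiff_slice hWs t)).mul
            ((contDiff_dt' hWs).comp (contDiff_id.prodMk contDiff_const))
        exact h.continuous
      have hcont2 : Continuous (fun x : ℝ×ℝ => ν * (fderiv ℝ v1 x (1,0) + fderiv ℝ v2 x (0,1))) := by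
        have h : ContDiff ℝ (⊤ : ℕ∞) (fun x : ℝ×ℝ => ν * (fderiv ℝ v1 x (1,0) + fderiv ℝ v2 x (0,1))) :=
          contDiff_const.mul (((hv1s.fderiv_right (by simp)).clm_apply contDiff_const).add
            ((hv2s.fderiv_right (by simp)).clm_apply contDiff_const))
        exact h.continuous
      have step1 : (∫ x in disk, psi ε (ω x t) * dt' Wf (x,t))
          ≤ ∫ x in disk, ν * (fderiv ℝ v1 x (1,0) + fderiv ℝ v2 x (0,1)) :=
        setIntegral_mono_on (intg hcont1) (intg hcont2) hmeas hpoint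
      have step2 : (∫ x in disk, ν * (fderiv ℝ v1 x (1,0) + fderiv ℝ v2 x (0,1)))
          = ν * ∫ x in disk, (fderiv ℝ v1 x (1,0) + fderiv ℝ v2 x (0,1)) :=
        integral_const_mul ν _
      have step3 := div_disk v1 v2 hv1s hv2s
      have hbd : ∀ θ : ℝ, Real.cos θ * v1 (Real.cos θ, Real.sin θ)
            + Real.sin θ * v2 (Real.cos θ, Real.sin θ)
          = psi ε (ω (Real.cos θ, Real.sin θ) t) * (deriv α t / (2 * Real.pi * ν)) := by
        intro θ
        have hcirc : ((Real.cos θ, Real.sin θ) : ℝ×ℝ).1 ^ 2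
            + ((Real.cos θ, Real.sin θ) : ℝ×ℝ).2 ^ 2 = 1 := Real.cos_sq_add_sin_sq θ
        have hn := hneumann (Real.cos θ, Real.sin θ) hcirc t ht.le
        rw [hpd1, hpd2] at hn
        have hWfeq : psi ε (Wf ((Real.cos θ, Real.sin θ), t))
            = psi ε (ω (Real.cos θ, Real.sin θ) t) := rfl
        simp only [hv1def, hv2def, hWfeq]
        rw [← hn]
        ring
      have hpsibd : ∀ θ ∈ Set.uIoc (-Real.pi) Real.pi,
          ‖Real.cos θ * v1 (Real.cos θ, Real.sin θ) + Real.sin θ * v2 (Real.cos θ, Real.sin θ)‖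
            ≤ |deriv α t| / (2 * Real.pi * ν) := by
        intro θ _
        rw [hbd θ, Real.norm_eq_abs, abs_mul]
        have h2πν : (0:ℝ) < 2 * Real.pi * ν := by positivity
        rw [abs_div, abs_of_pos h2πν]
        calc |psi ε (ω (Real.cos θ, Real.sin θ) t)| * (|deriv α t| / (2 * Real.pi * ν))
            ≤ 1 * (|deriv α t| / (2 * Real.pi * ν)) := by
              apply mul_le_mul_of_nonneg_right (abs_psi_le ε _) (by positivity)
          _ = |deriv α t| / (2 * Real.pi * ν) := one_mul _
      have hintbd := intervalIntegral.norm_integral_le_of_norm_le_const hpsibd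
      calc (∫ x in disk, psi ε (ω x t) * dt' Wf (x,t))
          ≤ ν * ∫ x in disk, (fderiv ℝ v1 x (1,0) + fderiv ℝ v2 x (0,1)) :=
            step1.trans (le_of_eq step2)
        _ = ν * ∫ θ in (-Real.pi)..Real.pi, (Real.cos θ * v1 (Real.cos θ, Real.sin θ)
              + Real.sin θ * v2 (Real.cos θ, Real.sin θ)) := by rw [step3]
        _ ≤ ν * ((|deriv α t| / (2 * Real.pi * ν)) * |Real.pi - -Real.pi|) := by
            apply mul_le_mul_of_nonneg_left _ hν.le
            exact le_trans (le_abs_self _) hintbd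
        _ = |deriv α t| := by
            rw [abs_of_pos (by linarith [Real.pi_pos] : (0:ℝ) < Real.pi - -Real.pi)]
            field_simp
            ring
    -- monotonicity argument
    have hA : ∀ u : ℝ, HasDerivAt (fun u => ∫ s in (0:ℝ)..u, |deriv α s|) (|deriv α u|) u :=
      fun u => intervalIntegral.integral_hasDerivAt_right (habsc.intervalIntegrable 0 u)
        habsc.stronglyMeasurable.stronglyMeasurableAtFilter habsc.continuousAt
    have hHd : ∀ u : ℝ, HasDerivAt
        (fun u => (∫ x in disk, phi ε (ω x u)) - ∫ s in (0:ℝ)..u, |deriv α s|)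
        ((∫ x in disk, psi ε (ω x u) * dt' Wf (x,u)) - |deriv α u|) u :=
      fun u => (hGd u).sub (hA u)
    have hmono : AntitoneOn
        (fun u => (∫ x in disk, phi ε (ω x u)) - ∫ s in (0:ℝ)..u, |deriv α s|)
        (Icc 0 t₀) := by
      apply antitoneOn_of_deriv_nonpos (convex_Icc 0 t₀)
      · exact fun u _ => ((hHd u).continuousAt.continuousWithinAt)
      · exact fun u _ => ((hHd u).differentiableAt.differentiableWithinAt)
      · intro u hu
        rw [interior_Icc] at hu
        rw [(hHd u).deriv]
        have := key u hu.1
        linarith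
    have hm := hmono ⟨le_refl 0, ht₀.le⟩ ⟨ht₀.le, le_refl t₀⟩ ht₀.le
    simp only [intervalIntegral.integral_same] at hm
    linarith
  -- pass to the limit ε → 0
  have hV : 0 ≤ (volume disk).toReal := ENNReal.toReal_nonneg
  have habs : ∀ ε : ℝ, 0 < ε → (∫ x in disk, |ω x t₀|)
      ≤ ((∫ x in disk, |ω x 0|) + ∫ s in (0:ℝ)..t₀, |deriv α s|)
        + ε * (volume disk).toReal := by
    intro ε hε0
    have hε : ε ≠ 0 := hε0.ne'
    have hphic : ∀ t : ℝ, Continuous (fun x : ℝ×ℝ => phi ε (ω x t)) := fun t =>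
      Real.continuous_sqrt.comp ((((hc t).pow 2)).add continuous_const)
    have h1 : (∫ x in disk, |ω x t₀|) ≤ ∫ x in disk, phi ε (ω x t₀) :=
      setIntegral_mono_on (intg (hc t₀).abs) (intg (hphic t₀)) hmeas
        (fun x _ => abs_le_phi ε (ω x t₀))
    have h2 : (∫ x in disk, phi ε (ω x 0)) ≤ ∫ x in disk, (|ω x 0| + ε) := by
      apply setIntegral_mono_on (intg (hphic 0))
        (((intg (hc 0).abs)).add (integrableOn_const hvol.ne)) hmeas
      intro x _
      calc phi ε (ω x 0) ≤ |ω x 0| + |ε| := phi_le ε (ω x 0)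
        _ = |ω x 0| + ε := by rw [abs_of_pos hε0]
    have h3 : (∫ x in disk, (|ω x 0| + ε))
        = (∫ x in disk, |ω x 0|) + ε * (volume disk).toReal := by
      rw [integral_add (intg (hc 0).abs) (integrableOn_const hvol.ne),
        setIntegral_const, smul_eq_mul, mul_comm, measureReal_def]
    linarith [main ε hε0, h1, h2, h3]
  apply le_of_forall_pos_le_add
  intro δ hδ
  have h := habs (δ / ((volume disk).toReal + 1)) (by positivity)
  have hle : (δ / ((volume disk).toReal + 1)) * (volume disk).toReal ≤ δ := by
    rw [div_mul_eq_mul_div, div_le_iff₀ (by linarith)]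
    nlinarith
  linarith
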